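/- (Theorem 1) Let p : ℕ → ℝ satisfy 0 < p(N) < 1 for all N, N·p(N)/ln N → ∞, and N·(1−p(N))/ln N → ∞ as N → ∞. Then the difference H_Bp(N, p(N)) − (N²·H(p(N)) − log₂(N!)) is nonnegative for every N and tends to 0 as N → ∞. -/

import Mathlib

open Finset

attribute [local instance] Classical.propDecidable

noncomputable section

/-- Row equivalence of adjacency matrices: `A` and `B` are equivalent when some
permutation of the rows (i.e. a relabeling of the unlabeled vertex part) sends `A` to `B`. -/
def rowRelSetoid (N : ℕ) : Setoid (Fin N → Fin N → Bool) where
  r A B := ∃ σ : Equiv.Perm (Fin N), ∀ i j, A (σ i) j = B i j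
  iseqv := by
    refine ⟨fun A => ⟨1, fun i j => rfl⟩, ?_, ?_⟩
    · rintro A B ⟨σ, h⟩
      refine ⟨σ⁻¹, fun i j => ?_⟩
      rw [← h (σ⁻¹ i) j, ← Equiv.Perm.mul_apply, mul_inv_cancel, Equiv.Perm.one_apply]
    · rintro A B C ⟨σ, h⟩ ⟨τ, h'⟩
      refine ⟨σ * τ, fun i j => ?_⟩
      rw [Equiv.Perm.mul_apply, h (τ i) j, h' i j]

instance (N : ℕ) : Fintype (Quotient (rowRelSetoid N)) := Fintype.ofFinite _

/-- Number of `true` entries (edges) of an adjacency matrix. -/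
def edgeCount {N : ℕ} (A : Fin N → Fin N → Bool) : ℕ :=
  (univ.filter fun ij : Fin N × Fin N => A ij.1 ij.2 = true).card

/-- Probability of a fixed adjacency matrix under i.i.d. Bernoulli(p) entries. -/
def matProb (N : ℕ) (p : ℝ) (A : Fin N → Fin N → Bool) : ℝ :=
  p ^ edgeCount A * (1 - p) ^ (N ^ 2 - edgeCount A)

/-- The pushforward probability of a row-equivalence class (the partially-labeled
bipartite graph distribution). -/
def classProb (N : ℕ) (p : ℝ) (ω : Quotient (rowRelSetoid N)) : ℝ :=
  ∑ A : Fin N → Fin N → Bool,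
    if Quotient.mk (rowRelSetoid N) A = ω then matProb N p A else 0

/-- Shannon entropy (base 2) of the partially-labeled bipartite graph distribution. -/
def HBp (N : ℕ) (p : ℝ) : ℝ :=
  ∑ ω : Quotient (rowRelSetoid N), -(classProb N p ω * Real.logb 2 (classProb N p ω))

/-- Binary entropy function, base 2. -/
def binEnt (p : ℝ) : ℝ := -(p * Real.logb 2 p) - (1 - p) * Real.logb 2 (1 - p)

/-- Size of the row stabilizer (automorphism group) of a matrix. -/
def autCard {N : ℕ} (A : Fin N → Fin N → Bool) : ℕ :=
  Fintype.card {σ : Equiv.Perm (Fin N) // ∀ i j, A (σ i) j = A i j}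

/-!
The row class of `A` is its orbit under row permutations, of size `N! / |Aut A|`, and all its
members are equally likely; hence `H_Bp = N²·H(p) − log₂ N! + E[log₂ |Aut A|]` and the gap is
`E[log₂ |Aut A|] ≥ 0`. A nontrivial row automorphism needs two equal rows, so
`log₂ |Aut A| ≤ log₂ N! · #{i ≠ j | A i = A j}`, and two fixed rows agree with probability
`(p² + (1 − p)²)^N ≤ exp(−2Np(1 − p))`. The gap is therefore at most `N⁴ exp(−2Np(1 − p))`,
which tends to `0` because `2Np(1 − p) ≥ min(Np, N(1 − p))` outgrows every multiple of `log N`.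
-/

section PiWeight

variable {ι α : Type*} [Fintype ι]

def piWeight (w : α → ℝ) (x : ι → α) : ℝ := ∏ i, w (x i)

lemma piWeight_pos {w : α → ℝ} (hw : ∀ a, 0 < w a) (x : ι → α) : 0 < piWeight w x :=
  Finset.prod_pos fun i _ => hw (x i)

lemma piWeight_comp_perm (w : α → ℝ) (x : ι → α) (σ : Equiv.Perm ι) :
    piWeight w (x ∘ σ) = piWeight w x :=
  Equiv.prod_comp σ fun i => w (x i)

lemma piWeight_pow (w : α → ℝ) (n : ℕ) (x : ι → α) :
    piWeight w x ^ n = piWeight (fun a => w a ^ n) x :=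
  (prod_pow _ _ _).symm

variable [DecidableEq ι] [Fintype α]

lemma sum_piWeight (w : α → ℝ) :
    ∑ x : ι → α, piWeight w x = (∑ a, w a) ^ Fintype.card ι := by
  simp only [piWeight, ← Fintype.prod_sum, prod_const, card_univ]

lemma sum_piWeight_mul_prod {w : α → ℝ} (hw : ∑ a, w a = 1) (s : Finset ι)
    (g : ι → α → ℝ) :
    ∑ x : ι → α, piWeight w x * ∏ i ∈ s, g i (x i) = ∏ i ∈ s, ∑ a, w a * g i a := by
  have hfactor : ∀ x : ι → α, piWeight w x * ∏ i ∈ s, g i (x i)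
      = ∏ i, w (x i) * if i ∈ s then g i (x i) else 1 := fun x => by
    rw [prod_mul_distrib, prod_ite_mem, univ_inter, piWeight]
  rw [sum_congr rfl fun x _ => hfactor x]
  rw [← Fintype.prod_sum (fun i a => w a * if i ∈ s then g i a else 1)]
  calc ∏ i, ∑ a, w a * (if i ∈ s then g i a else 1)
      = ∏ i, if i ∈ s then ∑ a, w a * g i a else 1 :=
        prod_congr rfl fun i _ => by split_ifs <;> simp [hw]
    _ = ∏ i ∈ s, ∑ a, w a * g i a := by rw [prod_ite_mem, univ_inter]

lemma sum_piWeight_mul_apply {w : α → ℝ} (hw : ∑ a, w a = 1) (i : ι) (g : α → ℝ) :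
    ∑ x : ι → α, piWeight w x * g (x i) = ∑ a, w a * g a := by
  simpa using sum_piWeight_mul_prod hw {i} fun _ => g

lemma sum_piWeight_mul_ite_apply_eq [DecidableEq α] {w : α → ℝ} (hw : ∑ a, w a = 1)
    {i j : ι} (hij : i ≠ j) :
    ∑ x : ι → α, piWeight w x * (if x i = x j then 1 else 0) = ∑ a, w a ^ 2 := by
  have hsplit : ∀ x : ι → α, (if x i = x j then (1 : ℝ) else 0)
      = ∑ a, ∏ k ∈ {i, j}, if x k = a then 1 else 0 := fun x => by
    rw [sum_congr rfl fun a _ => prod_pair hij]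
    simp only [mul_ite, mul_one, mul_zero, sum_ite_eq, mem_univ, if_true]
  simp_rw [hsplit, mul_sum]
  rw [sum_comm]
  refine sum_congr rfl fun a _ => ?_
  rw [sum_piWeight_mul_prod hw _ fun _ b => if b = a then 1 else 0]
  simp [card_pair hij]

lemma sum_piWeight_mul_logb {w : α → ℝ} (hw : ∑ a, w a = 1) (hw0 : ∀ a, w a ≠ 0) (b : ℝ) :
    ∑ x : ι → α, piWeight w x * Real.logb b (piWeight w x)
      = Fintype.card ι * ∑ a, w a * Real.logb b (w a) := by
  have hlog : ∀ x : ι → α, Real.logb b (piWeight w x) = ∑ i, Real.logb b (w (x i)) :=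
    fun x => Real.logb_prod _ _ fun i _ => hw0 _
  calc ∑ x : ι → α, piWeight w x * Real.logb b (piWeight w x)
      = ∑ i, ∑ x : ι → α, piWeight w x * Real.logb b (w (x i)) := by
        simp_rw [hlog, mul_sum]
        exact sum_comm
    _ = Fintype.card ι * ∑ a, w a * Real.logb b (w a) := by
        simp [sum_piWeight_mul_apply hw _ fun a => Real.logb b (w a)]

end PiWeight

section Bernoulli

def bernWeight (p : ℝ) (b : Bool) : ℝ := if b then p else 1 - p

variable {p : ℝ}

lemma sum_bernWeight (p : ℝ) : ∑ b, bernWeight p b = 1 := by simp [bernWeight]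

lemma bernWeight_pos (hp0 : 0 < p) (hp1 : p < 1) (b : Bool) : 0 < bernWeight p b := by
  cases b <;> simp [bernWeight, hp0, hp1]

lemma sum_piWeight_bernWeight {ι : Type*} [Fintype ι] [DecidableEq ι] (p : ℝ) :
    ∑ r : ι → Bool, piWeight (bernWeight p) r = 1 := by
  rw [sum_piWeight, sum_bernWeight, one_pow]

lemma sum_bernWeight_mul_logb (p : ℝ) :
    ∑ b, bernWeight p b * Real.logb 2 (bernWeight p b) = -binEnt p := by
  simp only [bernWeight, binEnt, Fintype.sum_bool, if_true, Bool.false_eq_true, if_false]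
  ring

variable {N : ℕ}

lemma matProb_eq_piWeight (p : ℝ) (A : Fin N → Fin N → Bool) :
    matProb N p A = piWeight (piWeight (bernWeight p)) A := by
  have hcompl : #{ij : Fin N × Fin N | ¬A ij.1 ij.2 = true} = N ^ 2 - edgeCount A := by
    have htotal := card_filter_add_card_filter_not (s := (univ : Finset (Fin N × Fin N)))
      (p := fun ij => A ij.1 ij.2 = true)
    rw [card_univ, Fintype.card_prod, Fintype.card_fin] at htotal
    rw [edgeCount, sq]
    omega
  simp only [piWeight, bernWeight,
    ← Fintype.prod_prod_type' fun i j => if A i j then p else 1 - p]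
  rw [prod_ite, prod_const, prod_const, hcompl, matProb, edgeCount]

lemma sum_matProb (p : ℝ) : ∑ A : Fin N → Fin N → Bool, matProb N p A = 1 := by
  rw [sum_congr rfl fun A _ => matProb_eq_piWeight p A, sum_piWeight, sum_piWeight_bernWeight,
    one_pow]

lemma matProb_pos (hp0 : 0 < p) (hp1 : p < 1) (A : Fin N → Fin N → Bool) :
    0 < matProb N p A := by
  rw [matProb_eq_piWeight]
  exact piWeight_pos (piWeight_pos (bernWeight_pos hp0 hp1)) A

lemma matProb_comp_perm (p : ℝ) (A : Fin N → Fin N → Bool) (σ : Equiv.Perm (Fin N)) :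
    matProb N p (A ∘ σ) = matProb N p A := by
  simp only [matProb_eq_piWeight, piWeight_comp_perm]

lemma sum_matProb_mul_logb (hp0 : 0 < p) (hp1 : p < 1) :
    ∑ A : Fin N → Fin N → Bool, matProb N p A * Real.logb 2 (matProb N p A)
      = -(N ^ 2 * binEnt p) := by
  simp only [matProb_eq_piWeight]
  rw [sum_piWeight_mul_logb (sum_piWeight_bernWeight p)
      fun r => (piWeight_pos (bernWeight_pos hp0 hp1) r).ne',
    sum_piWeight_mul_logb (sum_bernWeight p) fun b => (bernWeight_pos hp0 hp1 b).ne',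
    sum_bernWeight_mul_logb]
  simp only [Fintype.card_fin]
  ring

lemma sum_matProb_mul_ite_row_eq (p : ℝ) {i j : Fin N} (hij : i ≠ j) :
    ∑ A : Fin N → Fin N → Bool, matProb N p A * (if A i = A j then 1 else 0)
      = (p ^ 2 + (1 - p) ^ 2) ^ N := by
  simp only [matProb_eq_piWeight]
  rw [sum_piWeight_mul_ite_apply_eq (sum_piWeight_bernWeight p) hij]
  simp_rw [piWeight_pow, sum_piWeight, Fintype.card_fin]
  simp [bernWeight]

end Bernoulli

section RowClasses

open MulAction

-- `(Perm (Fin N))ᵈᵐᵃ` permutes rows, `(DomMulAct.mk σ • A) i = A (σ i)`; the row classes are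
-- its orbits.

variable {N : ℕ}

lemma autCard_eq_card_stabilizer (A : Fin N → Fin N → Bool) :
    autCard A = Nat.card (stabilizer (Equiv.Perm (Fin N))ᵈᵐᵃ A) := by
  rw [autCard, ← Nat.card_eq_fintype_card]
  refine Nat.card_congr (DomMulAct.mk.subtypeEquiv fun σ => ?_)
  rw [DomMulAct.mem_stabilizer_iff]
  simp [funext_iff]

lemma card_orbit_mul_autCard (A : Fin N → Fin N → Bool) :
    (orbit (Equiv.Perm (Fin N))ᵈᵐᵃ A).ncard * autCard A = N.factorial := by
  rw [autCard_eq_card_stabilizer, ← index_stabilizer, mul_comm, Subgroup.card_mul_index,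
    Nat.card_congr DomMulAct.mk.symm, Nat.card_perm, Nat.card_eq_fintype_card, Fintype.card_fin]

lemma mk_eq_mk_iff_mem_orbit {A B : Fin N → Fin N → Bool} :
    Quotient.mk (rowRelSetoid N) B = Quotient.mk (rowRelSetoid N) A
      ↔ B ∈ orbit (Equiv.Perm (Fin N))ᵈᵐᵃ A := by
  rw [Quotient.eq, mem_orbit_symm, mem_orbit_iff]
  constructor
  · rintro ⟨σ, h⟩
    exact ⟨DomMulAct.mk σ, funext fun i => funext (h i)⟩
  · rintro ⟨c, rfl⟩
    exact ⟨DomMulAct.mk.symm c, fun i j => rfl⟩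

lemma classProb_mk (p : ℝ) (A : Fin N → Fin N → Bool) :
    classProb N p (Quotient.mk (rowRelSetoid N) A)
      = (orbit (Equiv.Perm (Fin N))ᵈᵐᵃ A).ncard * matProb N p A := by
  have hclass : ({B | Quotient.mk (rowRelSetoid N) B = Quotient.mk (rowRelSetoid N) A} :
      Finset (Fin N → Fin N → Bool)) = (orbit (Equiv.Perm (Fin N))ᵈᵐᵃ A).toFinset := by
    ext B
    simp [mk_eq_mk_iff_mem_orbit]
  rw [classProb, ← sum_filter, hclass, Set.ncard_eq_toFinset_card', ← nsmul_eq_mul,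
    ← sum_const]
  refine sum_congr rfl fun B hB => ?_
  obtain ⟨c, rfl⟩ := Set.mem_toFinset.mp hB
  exact matProb_comp_perm p A (DomMulAct.mk.symm c)

end RowClasses

lemma sum_pushforward_mul {X Y : Type*} [Fintype X] [Fintype Y] [DecidableEq Y] (f : X → Y)
    (P : X → ℝ) (g : Y → ℝ) :
    ∑ y, (∑ x, if f x = y then P x else 0) * g y = ∑ x, P x * g (f x) := by
  simp_rw [sum_mul, ite_mul, zero_mul]
  rw [sum_comm]
  simp

section Entropy

variable {N : ℕ} {p : ℝ}

lemma logb_classProb_mk (hp0 : 0 < p) (hp1 : p < 1) (A : Fin N → Fin N → Bool) :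
    Real.logb 2 (classProb N p (Quotient.mk (rowRelSetoid N) A))
      = Real.logb 2 (matProb N p A) + Real.logb 2 N.factorial - Real.logb 2 (autCard A) := by
  have hfac : ((MulAction.orbit (Equiv.Perm (Fin N))ᵈᵐᵃ A).ncard : ℝ) * autCard A
      = N.factorial := by
    exact_mod_cast card_orbit_mul_autCard A
  obtain ⟨horbit, haut⟩ := mul_ne_zero_iff.mp (hfac.trans_ne (by positivity))
  rw [classProb_mk, Real.logb_mul horbit (matProb_pos hp0 hp1 A).ne', ← hfac,
    Real.logb_mul horbit haut]
  ring

lemma HBp_eq_sub_logb_factorial_add (hp0 : 0 < p) (hp1 : p < 1) :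
    HBp N p = N ^ 2 * binEnt p - Real.logb 2 N.factorial
      + ∑ A : Fin N → Fin N → Bool, matProb N p A * Real.logb 2 (autCard A) := by
  calc HBp N p
      = ∑ A : Fin N → Fin N → Bool,
          matProb N p A * -Real.logb 2 (classProb N p (Quotient.mk (rowRelSetoid N) A)) := by
        simp_rw [HBp, neg_mul_eq_mul_neg]
        exact sum_pushforward_mul _ _ fun ω => -Real.logb 2 (classProb N p ω)
    _ = ∑ A : Fin N → Fin N → Bool, (-(matProb N p A * Real.logb 2 (matProb N p A))
          - matProb N p A * Real.logb 2 N.factorial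
          + matProb N p A * Real.logb 2 (autCard A)) := by
        refine sum_congr rfl fun A _ => ?_
        rw [logb_classProb_mk hp0 hp1]
        ring
    _ = _ := by
        rw [sum_add_distrib, sum_sub_distrib, sum_neg_distrib, sum_matProb_mul_logb hp0 hp1,
          ← sum_mul, sum_matProb]
        ring

end Entropy

section Automorphisms

variable {N : ℕ} {p : ℝ}

lemma autCard_eq_one_of_injective {A : Fin N → Fin N → Bool} (hA : Function.Injective A) :
    autCard A = 1 := by
  rw [autCard, Fintype.card_eq_one_iff]
  refine ⟨⟨1, fun i j => rfl⟩, fun ⟨σ, hσ⟩ => ?_⟩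
  ext i
  exact congrArg Fin.val (hA (funext (hσ i)))

lemma autCard_le_factorial (A : Fin N → Fin N → Bool) : autCard A ≤ N.factorial := by
  calc autCard A ≤ Fintype.card (Equiv.Perm (Fin N)) := Fintype.card_subtype_le _
    _ = N.factorial := by rw [Fintype.card_perm, Fintype.card_fin]

lemma one_le_autCard (A : Fin N → Fin N → Bool) : 1 ≤ autCard A :=
  Fintype.card_pos_iff.mpr ⟨⟨1, fun _ _ => rfl⟩⟩

lemma logb_autCard_le (A : Fin N → Fin N → Bool) :
    Real.logb 2 (autCard A)
      ≤ Real.logb 2 N.factorial * ∑ ij ∈ univ.offDiag, if A ij.1 = A ij.2 then 1 else 0 := by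
  have hfac : 0 ≤ Real.logb 2 N.factorial :=
    Real.logb_nonneg one_lt_two (by exact_mod_cast N.factorial_pos)
  by_cases hA : Function.Injective A
  · rw [autCard_eq_one_of_injective hA, Nat.cast_one, Real.logb_one]
    exact mul_nonneg hfac (sum_nonneg fun _ _ => by positivity)
  · obtain ⟨i, j, hAij, hij⟩ := Function.not_injective_iff.mp hA
    have hpair : (1 : ℝ) ≤ ∑ ij ∈ univ.offDiag, if A ij.1 = A ij.2 then 1 else 0 := by
      simpa [hAij] using single_le_sum (f := fun ij : Fin N × Fin N =>
        if A ij.1 = A ij.2 then (1 : ℝ) else 0) (fun _ _ => by positivity)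
        (show (i, j) ∈ univ.offDiag from mem_offDiag.mpr ⟨mem_univ _, mem_univ _, hij⟩)
    calc Real.logb 2 (autCard A) ≤ Real.logb 2 N.factorial :=
          Real.logb_le_logb_of_le one_lt_two (by exact_mod_cast one_le_autCard A)
            (by exact_mod_cast autCard_le_factorial A)
      _ ≤ _ := le_mul_of_one_le_right hfac hpair

lemma sum_matProb_mul_logb_autCard_nonneg (hp0 : 0 < p) (hp1 : p < 1) :
    0 ≤ ∑ A : Fin N → Fin N → Bool, matProb N p A * Real.logb 2 (autCard A) :=
  sum_nonneg fun A _ => mul_nonneg (matProb_pos hp0 hp1 A).le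
    (Real.logb_nonneg one_lt_two (by exact_mod_cast one_le_autCard A))

lemma sum_matProb_mul_logb_autCard_le_offDiag (hp0 : 0 < p) (hp1 : p < 1) :
    ∑ A : Fin N → Fin N → Bool, matProb N p A * Real.logb 2 (autCard A)
      ≤ Real.logb 2 N.factorial * #(univ : Finset (Fin N)).offDiag
          * (p ^ 2 + (1 - p) ^ 2) ^ N := by
  calc ∑ A : Fin N → Fin N → Bool, matProb N p A * Real.logb 2 (autCard A)
      ≤ ∑ A : Fin N → Fin N → Bool, matProb N p A * (Real.logb 2 N.factorial
          * ∑ ij ∈ univ.offDiag, if A ij.1 = A ij.2 then 1 else 0) :=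
        sum_le_sum fun A _ => mul_le_mul_of_nonneg_left (logb_autCard_le A)
          (matProb_pos hp0 hp1 A).le
    _ = Real.logb 2 N.factorial * ∑ ij ∈ (univ : Finset (Fin N)).offDiag,
          ∑ A : Fin N → Fin N → Bool, matProb N p A * if A ij.1 = A ij.2 then 1 else 0 := by
        simp_rw [mul_sum, sum_comm (s := univ), mul_left_comm]
    _ = _ := by
        rw [sum_congr rfl fun ij hij => sum_matProb_mul_ite_row_eq p (mem_offDiag.mp hij).2.2,
          sum_const, nsmul_eq_mul, mul_assoc]

lemma logb_factorial_le_sq (N : ℕ) : Real.logb 2 N.factorial ≤ N ^ 2 := by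
  have hnat : N.factorial ≤ 2 ^ (N ^ 2) :=
    calc N.factorial ≤ N ^ N := N.factorial_le_pow
      _ ≤ (2 ^ N) ^ N := Nat.pow_le_pow_left N.lt_two_pow_self.le N
      _ = 2 ^ (N ^ 2) := by rw [← pow_mul, sq]
  calc Real.logb 2 N.factorial ≤ Real.logb 2 ((2 : ℝ) ^ (N ^ 2)) :=
        Real.logb_le_logb_of_le one_lt_two (by exact_mod_cast N.factorial_pos)
          (by exact_mod_cast hnat)
    _ = N ^ 2 := by rw [Real.logb_pow, Real.logb_self_eq_one one_lt_two, mul_one]; push_cast; rfl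

lemma sq_add_one_sub_sq_pow_le_exp (p : ℝ) (N : ℕ) :
    (p ^ 2 + (1 - p) ^ 2) ^ N ≤ Real.exp (-(2 * N * p * (1 - p))) := by
  calc (p ^ 2 + (1 - p) ^ 2) ^ N = (1 - 2 * p * (1 - p)) ^ N := by ring
    _ ≤ Real.exp (-(2 * p * (1 - p))) ^ N :=
        pow_le_pow_left₀ (by nlinarith [sq_nonneg (2 * p - 1)]) (Real.one_sub_le_exp_neg _) N
    _ = Real.exp (-(2 * N * p * (1 - p))) := by rw [← Real.exp_nat_mul]; ring_nf

lemma sum_matProb_mul_logb_autCard_le (hp0 : 0 < p) (hp1 : p < 1) :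
    ∑ A : Fin N → Fin N → Bool, matProb N p A * Real.logb 2 (autCard A)
      ≤ N ^ 4 * Real.exp (-(2 * N * p * (1 - p))) := by
  have hoffDiag : (#(univ : Finset (Fin N)).offDiag : ℝ) ≤ N ^ 2 := by
    rw [offDiag_card, card_univ, Fintype.card_fin, sq]
    exact_mod_cast Nat.sub_le _ _
  refine (sum_matProb_mul_logb_autCard_le_offDiag hp0 hp1).trans ?_
  calc Real.logb 2 N.factorial * #(univ : Finset (Fin N)).offDiag * (p ^ 2 + (1 - p) ^ 2) ^ N
      ≤ N ^ 2 * N ^ 2 * Real.exp (-(2 * N * p * (1 - p))) :=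
        mul_le_mul (mul_le_mul (logb_factorial_le_sq N) hoffDiag (Nat.cast_nonneg _)
          (by positivity)) (sq_add_one_sub_sq_pow_le_exp p N) (by positivity) (by positivity)
    _ = N ^ 4 * Real.exp (-(2 * N * p * (1 - p))) := by ring

end Automorphisms

section Asymptotics

open Filter Topology

lemma min_le_two_mul_mul_one_sub {p : ℝ} (hp0 : 0 ≤ p) (hp1 : p ≤ 1) :
    min p (1 - p) ≤ 2 * p * (1 - p) := by
  rcases le_total p (1 - p) with h | h
  · exact (min_le_left _ _).trans (by nlinarith)
  · exact (min_le_right _ _).trans (by nlinarith)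

lemma tendsto_pow_mul_exp_neg_of_tendsto_div_log (k : ℕ) {x : ℕ → ℝ}
    (hx : Tendsto (fun N => x N / Real.log N) atTop atTop) :
    Tendsto (fun N : ℕ => (N : ℝ) ^ k * Real.exp (-x N)) atTop (𝓝 0) := by
  have hlog : Tendsto (fun N : ℕ => Real.log N) atTop atTop :=
    Real.tendsto_log_atTop.comp tendsto_natCast_atTop_atTop
  have hexponent : Tendsto (fun N : ℕ => Real.log N * (k - x N / Real.log N)) atTop atBot :=
    hlog.atTop_mul_atBot₀ (tendsto_atBot_add_const_left _ _ (tendsto_neg_atTop_atBot.comp hx))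
  refine (Real.tendsto_exp_atBot.comp hexponent).congr' ?_
  filter_upwards [eventually_ge_atTop 2] with N hN
  have hN : (1 : ℝ) < N := by exact_mod_cast hN
  have hlogN : Real.log N ≠ 0 := (Real.log_pos hN).ne'
  rw [Function.comp_apply, mul_sub, mul_div_cancel₀ _ hlogN, sub_eq_add_neg, Real.exp_add,
    mul_comm (Real.log N), Real.exp_nat_mul, Real.exp_log (by linarith)]

lemma tendsto_two_mul_mul_one_sub_div_log {p : ℕ → ℝ} (hp : ∀ N, 0 < p N ∧ p N < 1)
    (hgrow : Tendsto (fun N : ℕ => (N : ℝ) * p N / Real.log N) atTop atTop)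
    (hgrow' : Tendsto (fun N : ℕ => (N : ℝ) * (1 - p N) / Real.log N) atTop atTop) :
    Tendsto (fun N : ℕ => 2 * N * p N * (1 - p N) / Real.log N) atTop atTop := by
  have hmin : Tendsto (fun N : ℕ => (N : ℝ) / Real.log N * min (p N) (1 - p N)) atTop atTop := by
    refine tendsto_atTop.2 fun b => ?_
    filter_upwards [tendsto_atTop.1 hgrow b, tendsto_atTop.1 hgrow' b] with N h h'
    rw [mul_min_of_nonneg _ _ (div_nonneg N.cast_nonneg (Real.log_natCast_nonneg N))]
    simp only [div_mul_eq_mul_div]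
    exact le_min h h'
  refine tendsto_atTop_mono (fun N => ?_) hmin
  rw [show 2 * (N : ℝ) * p N * (1 - p N) / Real.log N
      = N / Real.log N * (2 * p N * (1 - p N)) by ring]
  exact mul_le_mul_of_nonneg_left
    (min_le_two_mul_mul_one_sub (hp N).1.le (hp N).2.le)
    (div_nonneg N.cast_nonneg (Real.log_natCast_nonneg N))

end Asymptotics

/-- Theorem 1: under `N·p(N)/ln N → ∞` and `N·(1−p(N))/ln N → ∞`, the gap
`H_Bp(N, p(N)) − (N²·H(p(N)) − log₂(N!))` is nonnegative for every `N` and tends to `0`. -/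
theorem partially_labeled_entropy_asymptotic (p : ℕ → ℝ)
    (hp : ∀ N, 0 < p N ∧ p N < 1)
    (hgrow : Filter.Tendsto (fun N : ℕ => (N : ℝ) * p N / Real.log N)
      Filter.atTop Filter.atTop)
    (hgrow' : Filter.Tendsto (fun N : ℕ => (N : ℝ) * (1 - p N) / Real.log N)
      Filter.atTop Filter.atTop) :
    (∀ N : ℕ, 0 ≤ HBp N (p N)
        - ((N : ℝ) ^ 2 * binEnt (p N) - Real.logb 2 (N.factorial : ℝ))) ∧
    Filter.Tendsto
      (fun N : ℕ => HBp N (p N)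
        - ((N : ℝ) ^ 2 * binEnt (p N) - Real.logb 2 (N.factorial : ℝ)))
      Filter.atTop (nhds 0) := by
  have hgap : ∀ N : ℕ, HBp N (p N) - ((N : ℝ) ^ 2 * binEnt (p N) - Real.logb 2 N.factorial)
      = ∑ A : Fin N → Fin N → Bool, matProb N (p N) A * Real.logb 2 (autCard A) := fun N => by
    rw [HBp_eq_sub_logb_factorial_add (hp N).1 (hp N).2]
    ring
  have hnonneg : ∀ N : ℕ, 0 ≤ HBp N (p N)
      - ((N : ℝ) ^ 2 * binEnt (p N) - Real.logb 2 N.factorial) := fun N => by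
    rw [hgap]
    exact sum_matProb_mul_logb_autCard_nonneg (hp N).1 (hp N).2
  refine ⟨hnonneg, squeeze_zero hnonneg
    (fun N => (hgap N).trans_le (sum_matProb_mul_logb_autCard_le (hp N).1 (hp N).2)) ?_⟩
  exact tendsto_pow_mul_exp_neg_of_tendsto_div_log 4
    (tendsto_two_mul_mul_one_sub_div_log hp hgrow hgrow')
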